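/- arXiv:1702.06460 — 3 statements merged into one kernel-verified Lean document; each statement's English description precedes it below -/
import Mathlib

section
/- Let P : ℝ³ → ℝ be a harmonic homogeneous polynomial of degree n ≥ 0, let a ∈ ℝ be any constant, and define the vector field 𝒩(x) = a P(x) x + (1 − a/(2n+1) − |x|²) ∇P(x). Then ∇ × (∇ × 𝒩)(x) = (n+1)(a+2) ∇P(x) for all x ∈ ℝ³. -/
open MeasureTheory Real
open scoped RealInnerProductSpace

noncomputable section

/-- Three-dimensional Euclidean space. -/
abbrev E3 : Type := EuclideanSpace ℝ (Fin 3)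

/-- Build an element of `E3` from coordinates. -/
def toE3 (v : Fin 3 → ℝ) : E3 := (WithLp.equiv 2 (Fin 3 → ℝ)).symm v

/-- Partial derivative in the `i`-th coordinate direction. -/
def pd (f : E3 → ℝ) (i : Fin 3) (x : E3) : ℝ :=
  fderiv ℝ f x (EuclideanSpace.single i 1)

/-- The gradient, as the vector of partial derivatives. -/
def grad3 (f : E3 → ℝ) (x : E3) : E3 := toE3 fun i => pd f i x

/-- The Laplacian: the sum of the second partial derivatives. -/
def lap3 (f : E3 → ℝ) (x : E3) : ℝ := ∑ i, pd (pd f i) i x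

/-- Divergence of a vector field. -/
def div3 (u : E3 → E3) (x : E3) : ℝ := ∑ i, pd (fun y => u y i) i x

/-- Componentwise Laplacian of a vector field. -/
def vlap3 (u : E3 → E3) (x : E3) : E3 := toE3 fun i => lap3 (fun y => u y i) x

/-- Cross product in `ℝ³`. -/
def cross3 (u v : E3) : E3 :=
  toE3 ![u 1 * v 2 - u 2 * v 1, u 2 * v 0 - u 0 * v 2, u 0 * v 1 - u 1 * v 0]

/-- The function `ℝ³ → ℝ` determined by a polynomial in three variables. -/
def polyFun (P : MvPolynomial (Fin 3) ℝ) : E3 → ℝ :=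
  fun x => MvPolynomial.eval (fun i => x i) P

/-- The curl of a vector field in `ℝ³`. -/
def curl3 (u : E3 → E3) (x : E3) : E3 :=
  toE3 ![pd (fun y => u y 2) 1 x - pd (fun y => u y 1) 2 x,
         pd (fun y => u y 0) 2 x - pd (fun y => u y 2) 0 x,
         pd (fun y => u y 1) 0 x - pd (fun y => u y 0) 1 x]

/-!
Since `P` is a polynomial, the whole computation can be carried out on `MvPolynomial` with the
formal partial derivatives `pderiv`. There `curl (curl F) = ∇ (div F) - Δ F`, and for
`𝒩 = a P x + (c - |x|²) ∇P` Euler's identity `x · ∇P = n P` together with `Δ P = 0` gives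
`div 𝒩 = (a (n + 3) - 2 n) P` and `Δ 𝒩 = (2 a - 6 - 4 (n - 1)) ∇P`; their difference of
gradients is `(n + 1) (a + 2) ∇P`, whatever the constant `c`.
-/

namespace MvPolynomial

variable {σ R : Type*} [CommRing R]

theorem pderiv_pderiv_comm (i j : σ) (p : MvPolynomial σ R) :
    pderiv i (pderiv j p) = pderiv j (pderiv i p) := by
  have h : ⁅pderiv i, pderiv j⁆ = (0 : Derivation R (MvPolynomial σ R) (MvPolynomial σ R)) :=
    derivation_ext fun k => by
      rw [Derivation.commutator_apply]
      classical simp [pderiv_X, Pi.single_apply, apply_ite]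
  rw [← sub_eq_zero, ← Derivation.commutator_apply, h, Derivation.zero_apply]

section

variable [Fintype σ]

theorem sum_pderiv_X_mul_pderiv (i : σ) (q : MvPolynomial σ R) :
    ∑ j, pderiv j (X i) * pderiv j q = pderiv i q := by
  classical simp [pderiv_X, Pi.single_apply]

theorem IsHomogeneous.sum_X_mul_pderiv_pderiv {p : MvPolynomial σ R} {n : ℕ}
    (hp : p.IsHomogeneous n) (i : σ) :
    ∑ j, X j * pderiv j (pderiv i p) = ((n : R) - 1) • pderiv i p := by
  have h := congr(pderiv i $hp.sum_X_mul_pderiv)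
  classical
  simp only [map_sum, pderiv_mul, pderiv_X, Pi.single_apply, pderiv_pderiv_comm i,
    Finset.sum_add_distrib, ite_mul, one_mul, zero_mul, Finset.sum_ite_eq', Finset.mem_univ,
    if_true, map_nsmul] at h
  rw [sub_smul, one_smul, eq_sub_iff_add_eq, add_comm, h, Nat.cast_smul_eq_nsmul]

def laplacian : MvPolynomial σ R →ₗ[R] MvPolynomial σ R :=
  ∑ i, (pderiv i).toLinearMap ∘ₗ (pderiv i).toLinearMap

theorem laplacian_apply (p : MvPolynomial σ R) :
    laplacian p = ∑ i, pderiv i (pderiv i p) := by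
  simp [laplacian]

theorem laplacian_mul (p q : MvPolynomial σ R) :
    laplacian (p * q) = laplacian p * q + 2 * ∑ i, pderiv i p * pderiv i q + p * laplacian q := by
  simp only [laplacian_apply, pderiv_mul, map_add, Finset.mul_sum, Finset.sum_mul,
    ← Finset.sum_add_distrib]
  exact Finset.sum_congr rfl fun i _ => by ring

theorem laplacian_C (a : R) : laplacian (C a : MvPolynomial σ R) = 0 := by
  simp [laplacian_apply]

theorem laplacian_X (i : σ) : laplacian (X i : MvPolynomial σ R) = 0 := by
  classical simp [laplacian_apply, pderiv_X, Pi.single_apply, apply_ite]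

theorem laplacian_pderiv (i : σ) (p : MvPolynomial σ R) :
    laplacian (pderiv i p) = pderiv i (laplacian p) := by
  simp only [laplacian_apply, map_sum, pderiv_pderiv_comm i]

def normSq : MvPolynomial σ R := ∑ i, X i ^ 2

theorem pderiv_normSq (i : σ) : pderiv i (normSq : MvPolynomial σ R) = 2 * X i := by
  classical simp [normSq, pderiv_X, Pi.single_apply, mul_comm]

theorem laplacian_normSq : laplacian (normSq : MvPolynomial σ R) = 2 * Fintype.card σ := by
  simp only [laplacian_apply, pderiv_normSq, two_mul, map_add, pderiv_X_self, Finset.sum_const,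
    Finset.card_univ, nsmul_eq_mul]
  ring

def divergence (F : σ → MvPolynomial σ R) : MvPolynomial σ R := ∑ i, pderiv i (F i)

/-- The `i`-th component of the paper's field `𝒩`, with an arbitrary constant `c` in place of
`1 - a / (2n + 1)`. -/
def nField (a c : R) (p : MvPolynomial σ R) (i : σ) : MvPolynomial σ R :=
  a • (X i * p) + (C c - normSq) * pderiv i p

variable {p : MvPolynomial σ R} {n : ℕ}

theorem divergence_nField (hp : p.IsHomogeneous n) (hlap : laplacian p = 0) (a c : R) :
    divergence (nField a c p) = (a * (n + Fintype.card σ) - 2 * n) • p := by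
  have hterm : ∀ i, pderiv i (nField a c p i) = a • (X i * pderiv i p + p)
      - 2 * (X i * pderiv i p) + (C c - normSq) * pderiv i (pderiv i p) := fun i => by
    simp only [nField, map_add, Derivation.map_smul, pderiv_mul, map_sub, pderiv_C, pderiv_normSq,
      pderiv_X_self, one_mul, smul_add]
    ring
  simp only [divergence, hterm, Finset.sum_add_distrib, Finset.sum_sub_distrib, ← Finset.mul_sum,
    hp.sum_X_mul_pderiv, ← laplacian_apply, hlap, Finset.sum_const,
    Finset.card_univ, smul_eq_C_mul, nsmul_eq_mul, map_sub, map_mul, map_add, map_natCast,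
    map_ofNat]
  ring

theorem laplacian_nField (hp : p.IsHomogeneous n) (hlap : laplacian p = 0) (a c : R) (i : σ) :
    laplacian (nField a c p i) = (2 * a - 2 * Fintype.card σ - 4 * (n - 1)) • pderiv i p := by
  have hgrad : ∑ j, pderiv j (C c - normSq) * pderiv j (pderiv i p)
      = -2 * ((n - 1 : R) • pderiv i p) := by
    simp only [map_sub, pderiv_C, pderiv_normSq, ← hp.sum_X_mul_pderiv_pderiv, Finset.mul_sum]
    exact Finset.sum_congr rfl fun j _ => by ring
  simp only [nField, map_add, map_smul, laplacian_mul, laplacian_X, laplacian_pderiv, hlap,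
    sum_pderiv_X_mul_pderiv, hgrad, map_zero]
  simp only [map_sub, laplacian_C, laplacian_normSq, smul_eq_C_mul, map_mul, map_natCast,
    map_ofNat, map_one]
  ring

end

def curl (F : Fin 3 → MvPolynomial (Fin 3) R) : Fin 3 → MvPolynomial (Fin 3) R :=
  ![pderiv 1 (F 2) - pderiv 2 (F 1), pderiv 2 (F 0) - pderiv 0 (F 2),
    pderiv 0 (F 1) - pderiv 1 (F 0)]

theorem curl_curl (F : Fin 3 → MvPolynomial (Fin 3) R) (i : Fin 3) :
    curl (curl F) i = pderiv i (divergence F) - laplacian (F i) := by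
  fin_cases i <;>
    simp only [curl, divergence, laplacian_apply, Fin.sum_univ_three, map_add, map_sub,
      Fin.zero_eta, Fin.mk_one, Fin.reduceFinMk, Matrix.cons_val_zero, Matrix.cons_val_one,
      Matrix.cons_val]
  · linear_combination pderiv_pderiv_comm 1 0 (F 1) + pderiv_pderiv_comm 2 0 (F 2)
  · linear_combination pderiv_pderiv_comm 0 1 (F 0) + pderiv_pderiv_comm 2 1 (F 2)
  · linear_combination pderiv_pderiv_comm 0 2 (F 0) + pderiv_pderiv_comm 1 2 (F 1)

end MvPolynomial

open MvPolynomial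

@[simp]
theorem toE3_apply (v : Fin 3 → ℝ) (i : Fin 3) : toE3 v i = v i := rfl

theorem hasFDerivAt_polyFun (p : MvPolynomial (Fin 3) ℝ) (x : E3) :
    HasFDerivAt (polyFun p)
      (∑ i, polyFun (pderiv i p) x • (EuclideanSpace.proj i : E3 →L[ℝ] ℝ)) x := by
  induction p using MvPolynomial.induction_on with
  | C c =>
    have h : polyFun (C c) = fun _ => c := funext fun y => by simp [polyFun]
    simpa [h, polyFun] using hasFDerivAt_const (𝕜 := ℝ) c x
  | add p q hp hq =>
    have h : polyFun (p + q) = polyFun p + polyFun q := funext fun y => by simp [polyFun]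
    rw [h]
    refine (hp.add hq).congr_fderiv ?_
    simp [polyFun, add_smul, Finset.sum_add_distrib]
  | mul_X p i hp =>
    have h : polyFun (p * X i) = fun y => polyFun p y * y i := funext fun y => by simp [polyFun]
    rw [h]
    refine (hp.mul (EuclideanSpace.proj i : E3 →L[ℝ] ℝ).hasFDerivAt).congr_fderiv ?_
    ext v
    simp [polyFun, pderiv_X, Pi.single_apply, Finset.sum_add_distrib, add_mul, Finset.mul_sum,
      apply_ite, mul_assoc]

theorem pd_polyFun (p : MvPolynomial (Fin 3) ℝ) (i : Fin 3) :
    pd (polyFun p) i = polyFun (pderiv i p) := by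
  ext x
  simp [pd, (hasFDerivAt_polyFun p x).fderiv, PiLp.single_apply]

def polyField (F : Fin 3 → MvPolynomial (Fin 3) ℝ) (y : E3) : E3 :=
  toE3 fun i => polyFun (F i) y

theorem curl3_polyField (F : Fin 3 → MvPolynomial (Fin 3) ℝ) :
    curl3 (polyField F) = polyField (curl F) := by
  ext y i
  simp only [curl3, polyField, curl, toE3_apply, pd_polyFun]
  fin_cases i <;> simp [polyFun]

theorem grad3_polyFun (p : MvPolynomial (Fin 3) ℝ) :
    grad3 (polyFun p) = polyField fun i => pderiv i p := by
  ext y i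
  simp [grad3, polyField, pd_polyFun]

theorem polyFun_normSq (y : E3) : polyFun normSq y = ‖y‖ ^ 2 := by
  simp [polyFun, normSq, EuclideanSpace.norm_sq_eq]

theorem laplacian_eq_zero_of_lap3 {p : MvPolynomial (Fin 3) ℝ}
    (h : ∀ x, lap3 (polyFun p) x = 0) : laplacian p = 0 := by
  refine MvPolynomial.funext fun v => ?_
  simpa [lap3, pd_polyFun, laplacian_apply, polyFun] using h (toE3 v)

theorem polyField_nField (a c : ℝ) (p : MvPolynomial (Fin 3) ℝ) (y : E3) :
    polyField (nField a c p) y =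
      (a * polyFun p y) • y + (c - ‖y‖ ^ 2) • grad3 (polyFun p) y := by
  ext i
  simp only [polyField, nField, grad3_polyFun, ← polyFun_normSq, toE3_apply, PiLp.add_apply,
    PiLp.smul_apply, polyFun, map_add, map_sub, map_mul, smul_eval, eval_X, eval_C, smul_eq_mul]
  ring

/-- for a harmonic homogeneous polynomial `P` of degree `n` and any constant
`a`, the field `𝒩(x) = a P(x) x + (1 − a/(2n+1) − |x|²) ∇P(x)` satisfies
`∇ × (∇ × 𝒩)(x) = (n+1)(a+2) ∇P(x)`. -/
theorem curl_curl_of_N_field (n : ℕ) (P : MvPolynomial (Fin 3) ℝ)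
    (hhom : P.IsHomogeneous n)
    (hharm : ∀ x, lap3 (polyFun P) x = 0) (a : ℝ) :
    ∀ x : E3,
      curl3 (curl3 (fun y => (a * polyFun P y) • y +
          (1 - a / (2 * (n : ℝ) + 1) - ‖y‖ ^ 2) • grad3 (polyFun P) y)) x
        = (((n : ℝ) + 1) * (a + 2)) • grad3 (polyFun P) x := by
  intro x
  have hlap := laplacian_eq_zero_of_lap3 hharm
  simp only [← polyField_nField]
  rw [curl3_polyField, curl3_polyField, grad3_polyFun]
  ext i
  simp only [polyField, toE3_apply, curl_curl, divergence_nField hhom hlap, Derivation.map_smul,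
    laplacian_nField hhom hlap, ← sub_smul, PiLp.smul_apply, polyFun, smul_eval, smul_eq_mul,
    Fintype.card_fin]
  ring
end
end

section
/- Let λ, μ ∈ ℝ satisfy μ > 0 and 3λ + 2μ > 0, and let G be the Kelvin matrix of fundamental solutions of the Lamé operator. Set b₁ = μ/(2μ+λ) and b₂ = 3(μ+λ)/(2μ+λ). Then for all x, y ∈ ℝ³ with x ≠ y, every unit vector ν ∈ ℝ³, and every vector b ∈ ℝ³, the conormal derivative of the Kelvin matrix satisfies λ (∇_x · (G(x−y)b)) ν + μ (∇_x(G(x−y)b) + (∇_x(G(x−y)b))ᵗ) ν = (−b₁ K₁(x,y) + K₂(x,y)) b, where K₁(x,y) = (ν (x−y)ᵗ − (x−y) νᵗ) / (4π|x−y|³) and K₂(x,y) = b₁ ((x−y)·ν)/(4π|x−y|³) I₃ + b₂ ((x−y)·ν)/(4π|x−y|⁵) (x−y)(x−y)ᵗ. -/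
open MeasureTheory Real Matrix
open scoped RealInnerProductSpace

noncomputable section

/-- The Kelvin matrix of fundamental solutions of the Lamé operator with parameters
`λ, μ`: `G_{jk}(x) = −(α₁/(4π)) δ_{jk}/|x| − (α₂/(4π)) x_j x_k/|x|³`, where
`α₁ = (1/μ + 1/(2μ+λ))/2` and `α₂ = (1/μ − 1/(2μ+λ))/2`. -/
def kelvin (lam mu : ℝ) (x : E3) : Matrix (Fin 3) (Fin 3) ℝ :=
  Matrix.of fun j k =>
    -(((1 / mu + 1 / (2 * mu + lam)) / 2) / (4 * π)) * (if j = k then (1 : ℝ) else 0) / ‖x‖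
      - (((1 / mu - 1 / (2 * mu + lam)) / 2) / (4 * π)) * (x j * x k) / ‖x‖ ^ 3

/-- The outer product `u vᵗ` of two vectors, as a `3 × 3` matrix. -/
def outer (u v : E3) : Matrix (Fin 3) (Fin 3) ℝ := Matrix.of fun i j => u i * v j

/-- The Jacobian matrix `(∇u)_{ij} = ∂u_i/∂x_j` of a vector field. -/
def jac3 (u : E3 → E3) (x : E3) : Matrix (Fin 3) (Fin 3) ℝ :=
  Matrix.of fun i j => fderiv ℝ (fun y => u y i) x (EuclideanSpace.single j 1)


/-! Off the pole, `G(r) b = c₁ b / |r| + c₂ ⟨r, b⟩ r / |r|³` with `c₁ = -α₁/(4π)`, `c₂ = -α₂/(4π)`.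
Differentiating, the Jacobian of `z ↦ G(z - y) b` is a combination of the rank-one matrices
`b rᵗ`, `r bᵗ`, `r rᵗ` and `I₃` (with `r = x - y`), so its trace and its symmetric part applied to `ν`
are explicit combinations of `b`, `r`, `ν`. Their coefficients agree with those of
`(−b₁ K₁ + K₂) b` because `α₁ − α₂ = 1/(2μ+λ)` and `2μ α₂ = (μ+λ)/(2μ+λ)`. -/

section Calculus

variable {F : Type*} [NormedAddCommGroup F] [InnerProductSpace ℝ F]

theorem hasFDerivAt_norm_of_ne_zero {r : F} (hr : r ≠ 0) :
    HasFDerivAt (‖·‖) (‖r‖⁻¹ • innerSL ℝ r) r := by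
  have hsq : HasFDerivAt (fun z : F => ‖z‖ ^ 2) (2 • innerSL ℝ r) r :=
    (hasStrictFDerivAt_norm_sq r).hasFDerivAt
  have := (Real.hasDerivAt_sqrt (by positivity : ‖r‖ ^ 2 ≠ 0)).comp_hasFDerivAt r hsq
  simp only [Function.comp_def, Real.sqrt_sq (norm_nonneg _)] at this
  refine this.congr_fderiv (ContinuousLinearMap.ext fun h => ?_)
  simp only [one_div, _root_.mul_inv_rev, _root_.smul_apply, coe_innerSL_apply, nsmul_eq_mul,
    Nat.cast_ofNat, smul_eq_mul]
  field_simp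

theorem hasFDerivAt_inv_norm_pow {r : F} (hr : r ≠ 0) (n : ℕ) :
    HasFDerivAt (fun z : F => (‖z‖ ^ n)⁻¹) ((-n / ‖r‖ ^ (n + 2)) • innerSL ℝ r) r := by
  have := (hasDerivAt_inv (pow_ne_zero n (norm_ne_zero_iff.mpr hr))).comp_hasFDerivAt r
    ((hasFDerivAt_norm_of_ne_zero hr).pow n)
  refine this.congr_fderiv (ContinuousLinearMap.ext fun h => ?_)
  rcases n with _ | n
  · simp
  · simp only [add_tsub_cancel_right, nsmul_eq_mul, Nat.cast_add, Nat.cast_one, neg_smul,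
      _root_.neg_apply, _root_.smul_apply, coe_innerSL_apply, smul_eq_mul, neg_add_rev]
    field_simp
    ring

theorem hasFDerivAt_kelvin_field (c₁ c₂ : ℝ) (b : F) {r : F} (hr : r ≠ 0) :
    HasFDerivAt (fun z : F => (c₁ / ‖z‖) • b + (c₂ * ⟪z, b⟫ / ‖z‖ ^ 3) • z)
      ((-c₁ / ‖r‖ ^ 3) • (innerSL ℝ r).smulRight b
        + (c₂ / ‖r‖ ^ 3) • (innerSL ℝ b).smulRight r
        - (3 * c₂ * ⟪r, b⟫ / ‖r‖ ^ 5) • (innerSL ℝ r).smulRight r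
        + (c₂ * ⟪r, b⟫ / ‖r‖ ^ 3) • ContinuousLinearMap.id ℝ F) r := by
  have h₁ := ((hasFDerivAt_inv_norm_pow hr 1).const_mul c₁).smul_const b
  have h₃ := (((hasFDerivAt_id r).inner ℝ (hasFDerivAt_const b r)).const_mul c₂).mul
    (hasFDerivAt_inv_norm_pow hr 3)
  have := h₁.add (h₃.smul (hasFDerivAt_id r))
  simp only [pow_one, ← div_eq_mul_inv] at this
  refine this.congr_fderiv (ContinuousLinearMap.ext fun h => ?_)
  simp only [Nat.cast_one, Nat.reduceAdd, id_eq, Pi.mul_apply, Nat.cast_ofNat, _root_.add_apply,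
    ContinuousLinearMap.smulRight_apply, _root_.smul_apply, coe_innerSL_apply, smul_eq_mul,
    ContinuousLinearMap.id_apply, ContinuousLinearMap.comp_apply, ContinuousLinearMap.prod_apply,
    _root_.zero_apply, fderivInnerCLM_apply, inner_zero_right, real_inner_comm b h, zero_add,
    _root_.sub_apply]
  match_scalars <;> ring

end Calculus

theorem toE3_ofLp (v : E3) : toE3 (fun i => v i) = v := rfl

theorem toE3_add (v w : Fin 3 → ℝ) : toE3 (v + w) = toE3 v + toE3 w := rfl

theorem toE3_sub (v w : Fin 3 → ℝ) : toE3 (v - w) = toE3 v - toE3 w := rfl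

theorem toE3_smul (c : ℝ) (v : Fin 3 → ℝ) : toE3 (c • v) = c • toE3 v := rfl

theorem jac3_eq_of_hasFDerivAt {u : E3 → E3} {L : E3 →L[ℝ] E3} {x : E3}
    (h : HasFDerivAt u L x) :
    jac3 u x = Matrix.of fun i j => L (EuclideanSpace.single j 1) i := by
  ext i j
  exact congrArg (· (EuclideanSpace.single j 1))
    ((EuclideanSpace.proj i : E3 →L[ℝ] ℝ).hasFDerivAt.comp x h).fderiv

theorem div3_eq_trace (u : E3 → E3) (x : E3) : div3 u x = (jac3 u x).trace := rfl

theorem outer_transpose (u v : E3) : (outer u v)ᵀ = outer v u := by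
  ext i j
  exact mul_comm _ _

theorem trace_outer (u v : E3) : (outer u v).trace = ⟪u, v⟫ := by
  simp [outer, Matrix.trace, PiLp.inner_apply, mul_comm]

theorem toE3_outer_mulVec (u v w : E3) :
    toE3 (outer u v *ᵥ fun i => w i) = ⟪v, w⟫ • u := by
  ext i
  simp only [toE3, outer, WithLp.equiv_symm_apply, mulVec, dotProduct, of_apply, PiLp.inner_apply,
    RCLike.inner_apply, ringHom_apply, PiLp.smul_apply, smul_eq_mul, Finset.sum_mul]
  exact Finset.sum_congr rfl fun _ _ => by ring

theorem kelvin_eq (lam mu : ℝ) (r : E3) :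
    kelvin lam mu r =
      (-((1 / mu + 1 / (2 * mu + lam)) / 2 / (4 * π)) / ‖r‖) • 1
        + (-((1 / mu - 1 / (2 * mu + lam)) / 2 / (4 * π)) / ‖r‖ ^ 3) • outer r r := by
  ext i j
  simp only [kelvin, one_div, mul_ite, mul_one, mul_zero, of_apply, outer, smul_of, Matrix.add_apply,
    Matrix.smul_apply, Matrix.one_apply, smul_eq_mul, Pi.smul_apply]
  split_ifs <;> ring

theorem toE3_kelvin_mulVec (lam mu : ℝ) (r b : E3) :
    toE3 (kelvin lam mu r *ᵥ fun i => b i) =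
      (-((1 / mu + 1 / (2 * mu + lam)) / 2 / (4 * π)) / ‖r‖) • b
        + (-((1 / mu - 1 / (2 * mu + lam)) / 2 / (4 * π)) * ⟪r, b⟫ / ‖r‖ ^ 3) • r := by
  simp only [kelvin_eq, Matrix.add_mulVec, Matrix.smul_mulVec, Matrix.one_mulVec, toE3_add,
    toE3_smul, toE3_ofLp, toE3_outer_mulVec, smul_smul, div_mul_eq_mul_div]

theorem jac3_kelvin_field (c₁ c₂ : ℝ) (b : E3) {x y : E3} (hxy : x ≠ y) :
    jac3 (fun z => (c₁ / ‖z - y‖) • b + (c₂ * ⟪z - y, b⟫ / ‖z - y‖ ^ 3) • (z - y)) x =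
      (-c₁ / ‖x - y‖ ^ 3) • outer b (x - y) + (c₂ / ‖x - y‖ ^ 3) • outer (x - y) b
        - (3 * c₂ * ⟪x - y, b⟫ / ‖x - y‖ ^ 5) • outer (x - y) (x - y)
        + (c₂ * ⟪x - y, b⟫ / ‖x - y‖ ^ 3) • 1 := by
  have h := (hasFDerivAt_kelvin_field c₁ c₂ b (sub_ne_zero.mpr hxy)).comp x
    (hasFDerivAt_sub_const y)
  refine (jac3_eq_of_hasFDerivAt h).trans ?_
  ext i j
  simp only [map_sub, ContinuousLinearMap.comp_id, _root_.add_apply, _root_.sub_apply,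
    _root_.smul_apply, ContinuousLinearMap.smulRight_apply, coe_innerSL_apply,
    EuclideanSpace.inner_single_right, ringHom_apply, one_mul, ContinuousLinearMap.id_apply,
    PiLp.add_apply, PiLp.sub_apply, PiLp.smul_apply, smul_eq_mul, PiLp.single_apply, mul_ite, mul_one,
    mul_zero, of_apply, outer, smul_of, of_add_of, of_sub_of, Matrix.add_apply, Pi.sub_apply,
    Pi.add_apply, Pi.smul_apply, Matrix.smul_apply, Matrix.one_apply, add_left_inj]
  ring

theorem conormal_derivative_kelvin_general (lam mu : ℝ) (hmu : 0 < mu)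
    (hconv : 0 < 3 * lam + 2 * mu)
    (x y : E3) (hxy : x ≠ y) (ν : E3) (b : E3) :
    let b₁ : ℝ := mu / (2 * mu + lam)
    let b₂ : ℝ := 3 * (mu + lam) / (2 * mu + lam)
    let w : E3 → E3 := fun z => toE3 ((kelvin lam mu (z - y)).mulVec fun i => b i)
    let K₁ : Matrix (Fin 3) (Fin 3) ℝ :=
      (4 * π * ‖x - y‖ ^ 3)⁻¹ • (outer ν (x - y) - outer (x - y) ν)
    let K₂ : Matrix (Fin 3) (Fin 3) ℝ :=
      (b₁ * ⟪x - y, ν⟫ / (4 * π * ‖x - y‖ ^ 3)) • (1 : Matrix (Fin 3) (Fin 3) ℝ)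
        + (b₂ * ⟪x - y, ν⟫ / (4 * π * ‖x - y‖ ^ 5)) • outer (x - y) (x - y)
    (lam * div3 w x) • ν + mu • toE3 ((jac3 w x + (jac3 w x)ᵀ).mulVec fun i => ν i)
      = toE3 (((-b₁) • K₁ + K₂).mulVec fun i => b i) := by
  intro b₁ b₂ w K₁ K₂
  have hw : w = _ := funext fun z => toE3_kelvin_mulVec lam mu (z - y) b
  rw [div3_eq_trace, hw, jac3_kelvin_field _ _ b hxy]
  simp only [b₁, b₂, K₁, K₂, Matrix.trace_add, Matrix.trace_sub, Matrix.trace_smul, trace_outer,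
    Matrix.trace_one, Fintype.card_fin, Matrix.transpose_add, Matrix.transpose_sub,
    Matrix.transpose_smul, Matrix.transpose_one, outer_transpose, Matrix.add_mulVec,
    Matrix.sub_mulVec, Matrix.smul_mulVec, Matrix.one_mulVec, toE3_add, toE3_sub, toE3_smul,
    toE3_ofLp, toE3_outer_mulVec, real_inner_self_eq_norm_sq, real_inner_comm (x - y) b,
    real_inner_comm b ν, smul_eq_mul]
  have hr : ‖x - y‖ ≠ 0 := norm_ne_zero_iff.mpr (sub_ne_zero.mpr hxy)
  have hmu₀ : mu ≠ 0 := hmu.ne'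
  -- `field_simp` normalises the denominator `2 * mu + lam` to this form before looking for it
  have hlam : mu * 2 + lam ≠ 0 := by linarith
  match_scalars <;> field_simp <;> ring

/-- the conormal derivative of the Kelvin matrix satisfies
`∂_ν (G(·−y)b)(x) = (−b₁ K₁(x,y) + K₂(x,y)) b` with
`K₁(x,y) = (ν (x−y)ᵗ − (x−y) νᵗ)/(4π|x−y|³)` and
`K₂(x,y) = b₁ ((x−y)·ν)/(4π|x−y|³) I₃ + b₂ ((x−y)·ν)/(4π|x−y|⁵) (x−y)(x−y)ᵗ`,
where `b₁ = μ/(2μ+λ)` and `b₂ = 3(μ+λ)/(2μ+λ)`. -/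
theorem conormal_derivative_kelvin (lam mu : ℝ) (hmu : 0 < mu)
    (hconv : 0 < 3 * lam + 2 * mu)
    (x y : E3) (hxy : x ≠ y) (ν : E3) (hν : ‖ν‖ = 1) (b : E3) :
    let b₁ : ℝ := mu / (2 * mu + lam)
    let b₂ : ℝ := 3 * (mu + lam) / (2 * mu + lam)
    let w : E3 → E3 := fun z => toE3 ((kelvin lam mu (z - y)).mulVec fun i => b i)
    let K₁ : Matrix (Fin 3) (Fin 3) ℝ :=
      (4 * π * ‖x - y‖ ^ 3)⁻¹ • (outer ν (x - y) - outer (x - y) ν)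
    let K₂ : Matrix (Fin 3) (Fin 3) ℝ :=
      (b₁ * ⟪x - y, ν⟫ / (4 * π * ‖x - y‖ ^ 3)) • (1 : Matrix (Fin 3) (Fin 3) ℝ)
        + (b₂ * ⟪x - y, ν⟫ / (4 * π * ‖x - y‖ ^ 5)) • outer (x - y) (x - y)
    (lam * div3 w x) • ν + mu • toE3 ((jac3 w x + (jac3 w x)ᵀ).mulVec fun i => ν i)
      = toE3 (((-b₁) • K₁ + K₂).mulVec fun i => b i) :=
  conormal_derivative_kelvin_general lam mu hmu hconv x y hxy ν b

end
end

section
/- Let 0 < r_i < r_e and set ρ = r_i/r_e ∈ (0,1). For an integer n ≥ 2 and δ > 0, define c_n = (n+2)²/(n−1)², ε_n = −1 − 3/(n−1), ξ₁ⁿ = 3/(4n+2), a_{1,δ} = (c_n + ε_n + iδ)/(2(c_n − ε_n − iδ)) ∈ ℂ and a_{2,δ} = (1 + ε_n + iδ)/(2(−1 + ε_n + iδ)) ∈ ℂ. Then there exist constants C₁, C₂ > 0, depending only on ρ, such that for all integers n ≥ 2 and all δ ∈ (0,1): C₁ (δ² + ρ^{2n}) ≤ | (ξ₁ⁿ − a_{1,δ})(ξ₁ⁿ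 − a_{2,δ}) + ((n−1)(n+2)/(2n+1)²) ρ^{2n+1} | ≤ C₂ (δ² + ρ^{2n}). -/
/-!
Put `s = (n+2)/(n-1) ∈ (1, 4]`. Then `c_n = s²`, `ε_n = -s`, `ξ₁ⁿ = (s-1)/(2(s+1))` and
`(n-1)(n+2)/(2n+1)² = s/(s+1)²`, and the two factors `ξ₁ⁿ - a_{j,δ}` are explicit multiples of `iδ`,
so the quantity equals `s/(s+1)² · (δ²/W + ρ^{2n+1})` with `W = (s(s+1) - iδ)(s+1 - iδ)`.
As `Re W = s(s+1)² - δ² ≥ 3` and `|W| ≤ 126`, both `Re(δ²/W)` and `|δ²/W|` are comparable to `δ²`,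
so bounding the modulus below by the real part and above by the triangle inequality gives the two
estimates, together with `s/(s+1)² ∈ [4/25, 1/4]`.
-/

open Complex

lemma div_sq_le_inv_re {w : ℂ} {m M : ℝ} (hm : 0 < m) (hre : m ≤ w.re) (hM : ‖w‖ ≤ M) :
    m / M ^ 2 ≤ w⁻¹.re := by
  have hw : 0 < ‖w‖ := hm.trans_le (hre.trans (re_le_norm w))
  rw [inv_re, normSq_eq_norm_sq]
  gcongr
  exact hm.le.trans hre

lemma norm_inv_le_of_le_re {w : ℂ} {m : ℝ} (hm : 0 < m) (hre : m ≤ w.re) : ‖w⁻¹‖ ≤ 1 / m := by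
  rw [norm_inv, ← one_div]
  gcongr
  exact hre.trans (re_le_norm w)

lemma le_norm_ofReal_mul_inv_add_ofReal {w : ℂ} {a t m M : ℝ} (ha : 0 ≤ a) (hm : 0 < m)
    (hre : m ≤ w.re) (hM : ‖w‖ ≤ M) : a * (m / M ^ 2) + t ≤ ‖(a : ℂ) * w⁻¹ + t‖ :=
  calc a * (m / M ^ 2) + t ≤ a * w⁻¹.re + t := by gcongr; exact div_sq_le_inv_re hm hre hM
    _ = ((a : ℂ) * w⁻¹ + t).re := by simp
    _ ≤ _ := re_le_norm _

lemma norm_ofReal_mul_inv_add_ofReal_le {w : ℂ} {a t m : ℝ} (ha : 0 ≤ a) (ht : 0 ≤ t)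
    (hm : 0 < m) (hre : m ≤ w.re) : ‖(a : ℂ) * w⁻¹ + t‖ ≤ a / m + t :=
  calc ‖(a : ℂ) * w⁻¹ + t‖ ≤ a * ‖w⁻¹‖ + t := by
        grw [norm_add_le, norm_mul, norm_real, norm_real, Real.norm_of_nonneg ha,
          Real.norm_of_nonneg ht]
    _ ≤ a * (1 / m) + t := by gcongr; exact norm_inv_le_of_le_re hm hre
    _ = a / m + t := by ring

section
variable {K : Type*} [Field K] {x : K}

lemma neg_one_sub_three_div_sub_one (hx : x - 1 ≠ 0) :
    -1 - 3 / (x - 1) = -((x + 2) / (x - 1)) := by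
  field_simp; ring

lemma three_div_four_mul_add_two (hx : x - 1 ≠ 0) :
    3 / (4 * x + 2) = ((x + 2) / (x - 1) - 1) / (2 * ((x + 2) / (x - 1) + 1)) := by
  field_simp; ring

lemma sub_one_mul_add_two_div_sq (hx : x - 1 ≠ 0) :
    (x - 1) * (x + 2) / (2 * x + 1) ^ 2 = (x + 2) / (x - 1) / ((x + 2) / (x - 1) + 1) ^ 2 := by
  field_simp; ring

end

lemma one_lt_add_two_div_sub_one {x : ℝ} (hx : 2 ≤ x) : 1 < (x + 2) / (x - 1) := by
  rw [one_lt_div (by linarith)]; linarith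

lemma add_two_div_sub_one_le_four {x : ℝ} (hx : 2 ≤ x) : (x + 2) / (x - 1) ≤ 4 := by
  rw [div_le_iff₀ (by linarith)]; linarith

lemma div_add_one_sq_le_one_fourth {s : ℝ} (hs : 0 ≤ s) : s / (s + 1) ^ 2 ≤ 1 / 4 := by
  rw [div_le_iff₀ (by positivity)]; nlinarith [sq_nonneg (s - 1)]

lemma four_div_twentyfive_le_div_add_one_sq {s : ℝ} (hs₀ : 1 / 4 ≤ s) (hs₁ : s ≤ 4) :
    4 / 25 ≤ s / (s + 1) ^ 2 := by
  rw [le_div_iff₀ (by positivity)]; nlinarith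

-- `e` stands for `iδ`, and `c_n = s²`, `ε_n = -s`, `ξ₁ⁿ = (s-1)/(2(s+1))`.
lemma xi_sub_a₁ (s e : ℂ) (h₁ : s + 1 ≠ 0) (h₂ : s * (s + 1) - e ≠ 0) :
    (s - 1) / (2 * (s + 1)) - (s ^ 2 + -s + e) / (2 * (s ^ 2 - -s - e)) =
      -(s * e) / ((s + 1) * (s * (s + 1) - e)) := by
  have h₂' : s ^ 2 - -s - e ≠ 0 := by convert h₂ using 1; ring
  rw [div_sub_div _ _ (mul_ne_zero two_ne_zero h₁) (mul_ne_zero two_ne_zero h₂'),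
    div_eq_div_iff (mul_ne_zero (mul_ne_zero two_ne_zero h₁) (mul_ne_zero two_ne_zero h₂'))
      (mul_ne_zero h₁ h₂)]
  ring

lemma xi_sub_a₂ (s e : ℂ) (h₁ : s + 1 ≠ 0) (h₃ : s + 1 - e ≠ 0) :
    (s - 1) / (2 * (s + 1)) - (1 + -s + e) / (2 * (-1 + -s + e)) =
      e / ((s + 1) * (s + 1 - e)) := by
  have h₃' : -1 + -s + e ≠ 0 := by convert neg_ne_zero.2 h₃ using 1; ring
  rw [div_sub_div _ _ (mul_ne_zero two_ne_zero h₁) (mul_ne_zero two_ne_zero h₃'),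
    div_eq_div_iff (mul_ne_zero (mul_ne_zero two_ne_zero h₁) (mul_ne_zero two_ne_zero h₃'))
      (mul_ne_zero h₁ h₃)]
  ring

section
variable {s δ : ℝ}

lemma xi_sub_a₁_mul_xi_sub_a₂ (hs : 0 < s) :
    (((s : ℂ) - 1) / (2 * (s + 1)) -
        ((s : ℂ) ^ 2 + -s + δ * I) / (2 * ((s : ℂ) ^ 2 - -s - δ * I))) *
      (((s : ℂ) - 1) / (2 * (s + 1)) - (1 + -(s : ℂ) + δ * I) / (2 * (-1 + -(s : ℂ) + δ * I))) =
      ((s / (s + 1) ^ 2 : ℝ) : ℂ) *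
        ((δ ^ 2 : ℝ) * (((s : ℂ) * (s + 1) - δ * I) * (s + 1 - δ * I))⁻¹) := by
  have h₁ : (s : ℂ) + 1 ≠ 0 := by exact_mod_cast (by positivity : s + 1 ≠ 0)
  have hne {a : ℝ} (ha : a ≠ 0) : (a : ℂ) - δ * I ≠ 0 := fun h => by
    simpa [ha] using congrArg re h
  have h₂ := hne (a := s * (s + 1)) (by positivity)
  have h₃ := hne (a := s + 1) (by positivity)
  push_cast at h₂ h₃
  rw [xi_sub_a₁ _ _ h₁ h₂, xi_sub_a₂ _ _ h₁ h₃]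
  push_cast
  field_simp
  linear_combination (-(s : ℂ) * δ ^ 2) * I_sq

lemma three_le_re_mul_sub_mul_I (hs : 1 ≤ s) (hδ : |δ| ≤ 1) :
    3 ≤ (((s : ℂ) * (s + 1) - δ * I) * (s + 1 - δ * I)).re := by
  have hre : (((s : ℂ) * (s + 1) - δ * I) * (s + 1 - δ * I)).re = s * (s + 1) ^ 2 - δ ^ 2 := by
    simp; ring
  rw [hre]
  nlinarith [sq_le_one_iff_abs_le_one δ |>.2 hδ]

lemma norm_mul_sub_mul_I_le (hs₀ : 0 ≤ s) (hs₁ : s ≤ 4) (hδ : |δ| ≤ 1) :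
    ‖((s : ℂ) * (s + 1) - δ * I) * (s + 1 - δ * I)‖ ≤ 126 := by
  have hnorm {a : ℝ} (ha : 0 ≤ a) : ‖(a : ℂ) - δ * I‖ ≤ a + 1 := by
    grw [norm_sub_le, norm_mul, norm_I, norm_real, norm_real, Real.norm_of_nonneg ha,
      Real.norm_eq_abs, hδ, mul_one]
  have h₁ := hnorm (a := s * (s + 1)) (by positivity)
  have h₂ := hnorm (a := s + 1) (by positivity)
  push_cast at h₁ h₂
  rw [norm_mul]
  calc _ ≤ (s * (s + 1) + 1) * (s + 1 + 1) := by gcongr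
    _ ≤ (4 * (4 + 1) + 1) * (4 + 1 + 1) := by gcongr
    _ = 126 := by norm_num

variable {ρ : ℝ} (k : ℕ)

lemma le_mul_norm_inv_add_pow (hs₁ : 1 ≤ s) (hs₄ : s ≤ 4) (hδ : |δ| ≤ 1) (hρ : 0 ≤ ρ) :
    4 / 25 * min (3 / 126 ^ 2) ρ * (δ ^ 2 + ρ ^ k) ≤
      s / (s + 1) ^ 2 *
        ‖((δ ^ 2 : ℝ) : ℂ) * (((s : ℂ) * (s + 1) - δ * I) * (s + 1 - δ * I))⁻¹ +
          ((ρ ^ (k + 1) : ℝ) : ℂ)‖ :=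
  calc 4 / 25 * min (3 / 126 ^ 2) ρ * (δ ^ 2 + ρ ^ k)
      = 4 / 25 * (min (3 / 126 ^ 2) ρ * δ ^ 2 + min (3 / 126 ^ 2) ρ * ρ ^ k) := by ring
    _ ≤ 4 / 25 * (3 / 126 ^ 2 * δ ^ 2 + ρ * ρ ^ k) := by
        gcongr
        · exact min_le_left _ _
        · exact min_le_right _ _
    _ = 4 / 25 * (δ ^ 2 * (3 / 126 ^ 2) + ρ ^ (k + 1)) := by ring
    _ ≤ _ :=
        mul_le_mul (four_div_twentyfive_le_div_add_one_sq (by linarith) hs₄)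
          (le_norm_ofReal_mul_inv_add_ofReal (by positivity) (by norm_num)
            (three_le_re_mul_sub_mul_I hs₁ hδ) (norm_mul_sub_mul_I_le (by linarith) hs₄ hδ))
          (by positivity) (by positivity)

lemma mul_norm_inv_add_pow_le (hs : 1 ≤ s) (hδ : |δ| ≤ 1) (hρ₀ : 0 ≤ ρ) (hρ₁ : ρ ≤ 1) :
    s / (s + 1) ^ 2 *
        ‖((δ ^ 2 : ℝ) : ℂ) * (((s : ℂ) * (s + 1) - δ * I) * (s + 1 - δ * I))⁻¹ +
          ((ρ ^ (k + 1) : ℝ) : ℂ)‖ ≤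
      1 / 4 * (δ ^ 2 + ρ ^ k) :=
  calc _ ≤ s / (s + 1) ^ 2 * (δ ^ 2 / 3 + ρ ^ (k + 1)) := by
        gcongr
        exact norm_ofReal_mul_inv_add_ofReal_le (by positivity) (by positivity) (by norm_num)
          (three_le_re_mul_sub_mul_I hs hδ)
    _ ≤ 1 / 4 * (δ ^ 2 + ρ ^ k) :=
        mul_le_mul (div_add_one_sq_le_one_fourth (by linarith))
          (add_le_add (by linarith [sq_nonneg δ]) (pow_le_pow_of_le_one hρ₀ hρ₁ k.le_succ))
          (by positivity) (by norm_num)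

end

/-- with `ρ = r_i/r_e ∈ (0,1)`, `c_n = (n+2)²/(n−1)²`, `ε_n = −1 − 3/(n−1)`,
`ξ₁ⁿ = 3/(4n+2)`, `a_{1,δ} = (c_n + ε_n + iδ)/(2(c_n − ε_n − iδ))` and
`a_{2,δ} = (1 + ε_n + iδ)/(2(−1 + ε_n + iδ))`, there are constants `C₁, C₂ > 0` depending
only on `ρ` such that for all `n ≥ 2` and `δ ∈ (0,1)`,
`C₁ (δ² + ρ^{2n}) ≤ |(ξ₁ⁿ − a_{1,δ})(ξ₁ⁿ − a_{2,δ}) + ((n−1)(n+2)/(2n+1)²) ρ^{2n+1}|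
  ≤ C₂ (δ² + ρ^{2n})`. -/
theorem denominator_two_sided_estimate (ri re : ℝ) (hri : 0 < ri) (hre : ri < re) :
    ∃ C₁ C₂ : ℝ, 0 < C₁ ∧ 0 < C₂ ∧
      ∀ n : ℕ, 2 ≤ n → ∀ δ : ℝ, 0 < δ → δ < 1 →
        let ρ : ℝ := ri / re
        let cn : ℝ := ((n : ℝ) + 2) ^ 2 / ((n : ℝ) - 1) ^ 2
        let εn : ℝ := -1 - 3 / ((n : ℝ) - 1)
        let ξ : ℂ := 3 / (4 * (n : ℂ) + 2)
        let a₁ : ℂ := ((cn : ℂ) + (εn : ℂ) + δ * Complex.I) /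
          (2 * ((cn : ℂ) - (εn : ℂ) - δ * Complex.I))
        let a₂ : ℂ := (1 + (εn : ℂ) + δ * Complex.I) /
          (2 * (-1 + (εn : ℂ) + δ * Complex.I))
        C₁ * (δ ^ 2 + ρ ^ (2 * n)) ≤
          ‖(ξ - a₁) * (ξ - a₂) +
            (((n : ℂ) - 1) * ((n : ℂ) + 2) / (2 * (n : ℂ) + 1) ^ 2) * (ρ : ℂ) ^ (2 * n + 1)‖ ∧
        ‖(ξ - a₁) * (ξ - a₂) +
            (((n : ℂ) - 1) * ((n : ℂ) + 2) / (2 * (n : ℂ) + 1) ^ 2) * (ρ : ℂ) ^ (2 * n + 1)‖ ≤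
          C₂ * (δ ^ 2 + ρ ^ (2 * n)) := by
  have hρ₀ : 0 < ri / re := div_pos hri (hri.trans hre)
  have hρ₁ : ri / re < 1 := (div_lt_one (hri.trans hre)).2 hre
  refine ⟨4 / 25 * min (3 / 126 ^ 2) (ri / re), 1 / 4, by positivity, by norm_num, ?_⟩
  intro n hn δ hδ₀ hδ₁ ρ cn εn ξ a₁ a₂
  have hx : (2 : ℝ) ≤ n := by exact_mod_cast hn
  have hδ : |δ| ≤ 1 := abs_le.2 ⟨by linarith, hδ₁.le⟩
  set s : ℝ := ((n : ℝ) + 2) / ((n : ℝ) - 1) with hs_def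
  have hs : (s : ℂ) = ((n : ℂ) + 2) / ((n : ℂ) - 1) := by rw [hs_def]; push_cast; rfl
  have hn₁ : (n : ℂ) - 1 ≠ 0 := by exact_mod_cast (by linarith : (n : ℝ) - 1 ≠ 0)
  have hs₁ : 1 < s := one_lt_add_two_div_sub_one hx
  have hξ : ξ = ((s : ℂ) - 1) / (2 * ((s : ℂ) + 1)) := by
    rw [hs]; exact three_div_four_mul_add_two hn₁
  have hcn : (cn : ℂ) = (s : ℂ) ^ 2 := by simp only [cn, hs_def]; push_cast; rw [div_pow]
  have hεn : (εn : ℂ) = -(s : ℂ) := by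
    simp only [εn]; push_cast; rw [hs]; exact neg_one_sub_three_div_sub_one hn₁
  have hq :
      ((n : ℂ) - 1) * ((n : ℂ) + 2) / (2 * (n : ℂ) + 1) ^ 2 = ((s / (s + 1) ^ 2 : ℝ) : ℂ) := by
    push_cast; rw [hs]; exact sub_one_mul_add_two_div_sq hn₁
  simp only [a₁, a₂]
  rw [hξ, hcn, hεn, xi_sub_a₁_mul_xi_sub_a₂ (by linarith), hq, ← ofReal_pow, ← mul_add, norm_mul,
    norm_real, Real.norm_of_nonneg (by positivity)]
  exact ⟨le_mul_norm_inv_add_pow _ hs₁.le (add_two_div_sub_one_le_four hx) hδ hρ₀.le,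
    mul_norm_inv_add_pow_le _ hs₁.le hδ hρ₀.le hρ₁.le⟩
end
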